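/- arXiv:1902.04990 — 4 statements merged into one kernel-verified Lean document; each statement's English description precedes it below -/
import Mathlib

section
/- For every l ∈ {1, …, m}, E[(Z_l / S) · 1_{S > c}] = (λ_l / Λ) · (1 − Σ_{h=0}^{c} Λ^h e^{−Λ} / h!). -/
/-!
Write `X = Z_l` and `Y = ∑_{j ≠ l} Z_j`, so that `X ~ Po(λ_l)` and `Y ~ Po(Λ - λ_l)` are independent
and `S = X + Y ~ Po(Λ)`. The Poisson size-bias identity `E[X f(X)] = r E[f(X + 1)]` for `X ~ Po(r)`,
applied in `X` for fixed `Y` with `f x = g (x + Y)` and `g n = 1_{n > c} / n`, gives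
`E[X g(S)] = λ_l E[g(S + 1)]`; applied once more to `S ~ Po(Λ)` it gives
`Λ E[g(S + 1)] = E[S g(S)] = P(S > c)`.
-/

open MeasureTheory ProbabilityTheory
open scoped NNReal Nat

namespace ProbabilityTheory

lemma poissonMeasure_zero : Po(0) = Measure.dirac 0 := by
  refine Measure.ext_of_singleton fun n => ?_
  rw [poissonMeasure_singleton, Measure.dirac_apply' _ (measurableSet_singleton _)]
  cases n <;> simp

lemma integral_natCast_mul_poissonMeasure (r : ℝ≥0) (f : ℕ → ℝ) :
    ∫ n, (n : ℝ) * f n ∂Po(r) = r * ∫ n, f (n + 1) ∂Po(r) := by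
  simp only [integral_poissonMeasure, smul_eq_mul, ← tsum_mul_left]
  set t : ℕ → ℝ := fun n => Real.exp (-r) * r ^ n / n ! * (n * f n)
  rw [← tsum_pnat_eq_tsum_of_eq_zero (f := t) (by simp [t]), tsum_pnat_eq_tsum_succ (f := t)]
  congr 1 with n
  simp only [t, Nat.factorial_succ]
  push_cast
  field_simp
  ring

lemma iIndepFun.hasLaw_finsetSum_poissonMeasure {ι Ω : Type*} [MeasurableSpace Ω] {μ : Measure Ω}
    {Z : ι → Ω → ℕ} {r : ι → ℝ≥0} (hindep : iIndepFun Z μ) (hZ : ∀ i, HasLaw (Z i) Po(r i) μ)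
    (s : Finset ι) :
    HasLaw (∑ i ∈ s, Z i) Po(∑ i ∈ s, r i) μ := by
  classical
  have := hindep.isProbabilityMeasure
  induction s using Finset.induction_on with
  | empty => simpa [poissonMeasure_zero] using hasLaw_dirac_of_ae_eq (P := μ) (X := 0) (x := 0) (by rfl)
  | insert i s hi ih =>
    rw [Finset.sum_insert hi, Finset.sum_insert hi]
    exact (hindep.indepFun_finsetSum_of_notMem₀ (fun j => (hZ j).aemeasurable) hi).symm
      |>.hasLaw_add_poissonMeasure (hZ i) ih

lemma integral_fst_div_add_mul_prod_poissonMeasure (a b : ℝ≥0) (h : ℕ → ℝ) (h_zero : h 0 = 0)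
    {C : ℝ} (hC : ∀ n, |h n| ≤ C) :
    ∫ p, (p.1 : ℝ) / ((p.1 + p.2 : ℕ) : ℝ) * h (p.1 + p.2) ∂Po(a).prod Po(b)
      = a / (a + b : ℝ≥0) * ∫ n, h n ∂Po(a + b) := by
  set g : ℕ → ℝ := fun n => h n / n with hg
  have hg_le : ∀ n, |g n| ≤ C := fun n => by
    rw [hg, abs_div, Nat.abs_cast]
    rcases n with _ | n
    · simpa using (abs_nonneg _).trans (hC 0)
    · exact (div_le_self (abs_nonneg _) (by simp)).trans (hC _)
  have h_split : ∀ p : ℕ × ℕ,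
      (p.1 : ℝ) / ((p.1 + p.2 : ℕ) : ℝ) * h (p.1 + p.2) = p.1 * g (p.1 + p.2) := fun p => by
    simp only [hg]
    ring
  have h_int_fst : Integrable (fun p : ℕ × ℕ => (p.1 : ℝ) * g (p.1 + p.2)) (Po(a).prod Po(b)) := by
    refine .of_bound .of_discrete C (.of_forall fun p => ?_)
    have h_ratio : |(p.1 : ℝ) / ((p.1 + p.2 : ℕ) : ℝ)| ≤ 1 := by
      rw [abs_of_nonneg (by positivity)]
      exact div_le_one_of_le₀ (by exact_mod_cast p.1.le_add_right p.2) (by positivity)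
    rw [Real.norm_eq_abs, ← h_split, abs_mul]
    exact (mul_le_of_le_one_left (abs_nonneg _) h_ratio).trans (hC _)
  have h_int_succ : Integrable (fun n => g (n + 1)) Po(b + a) :=
    .of_bound .of_discrete C (.of_forall fun n => hg_le (n + 1))
  calc ∫ p, (p.1 : ℝ) / ((p.1 + p.2 : ℕ) : ℝ) * h (p.1 + p.2) ∂Po(a).prod Po(b)
      = ∫ y, ∫ x, (x : ℝ) * g (x + y) ∂Po(a) ∂Po(b) := by
        rw [← integral_prod_symm _ h_int_fst]
        exact integral_congr_ae (.of_forall h_split)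
    _ = ∫ y, a * ∫ x, g (x + 1 + y) ∂Po(a) ∂Po(b) := by
        congr with y
        exact integral_natCast_mul_poissonMeasure a fun x => g (x + y)
    _ = a * ∫ n, g (n + 1) ∂Po(a + b) := by
        rw [integral_const_mul, add_comm a, ← poissonMeasure_conv_poissonMeasure,
          integral_conv (by rwa [poissonMeasure_conv_poissonMeasure])]
        congr with y
        congr with x
        rw [add_right_comm, add_comm x]
    _ = a / (a + b : ℝ≥0) * ∫ n, (n : ℝ) * g n ∂Po(a + b) := by
        rw [integral_natCast_mul_poissonMeasure]
        rcases eq_or_ne (a + b) 0 with hab | hab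
        · obtain ⟨rfl, rfl⟩ := add_eq_zero.mp hab
          simp
        · have : ((a + b : ℝ≥0) : ℝ) ≠ 0 := by exact_mod_cast hab
          field_simp
    _ = a / (a + b : ℝ≥0) * ∫ n, h n ∂Po(a + b) := by
        congr with n
        rcases n with _ | n
        · simp [h_zero]
        · rw [hg]
          field_simp

lemma IndepFun.integral_div_add_mul_poissonMeasure {Ω : Type*} [MeasurableSpace Ω] {μ : Measure Ω}
    [IsProbabilityMeasure μ] {X Y : Ω → ℕ} {a b : ℝ≥0} (hXY : IndepFun X Y μ)
    (hX : HasLaw X Po(a) μ) (hY : HasLaw Y Po(b) μ)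
    (h : ℕ → ℝ) (h_zero : h 0 = 0) {C : ℝ} (hC : ∀ n, |h n| ≤ C) :
    ∫ ω, (X ω : ℝ) / ((X ω + Y ω : ℕ) : ℝ) * h (X ω + Y ω) ∂μ
      = a / (a + b : ℝ≥0) * ∫ n, h n ∂Po(a + b) := by
  rw [← integral_fst_div_add_mul_prod_poissonMeasure a b h h_zero hC,
    ← (hXY.hasLaw_prod hX hY).integral_comp .of_discrete]
  rfl

lemma integral_ite_lt_eq_one_sub_sum_measureReal (ν : Measure ℕ) [IsProbabilityMeasure ν] (c : ℕ) :
    ∫ n, (if c < n then (1 : ℝ) else 0) ∂ν = 1 - ∑ h ∈ Finset.range (c + 1), ν.real {h} := by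
  have h_tail : {n | c < n} = ((Finset.range (c + 1) : Finset ℕ) : Set ℕ)ᶜ := by
    ext n
    simp
  have h_ind : (fun n : ℕ => if c < n then (1 : ℝ) else 0) = Set.indicator {n | c < n} 1 := by
    ext n
    simp [Set.indicator_apply]
  rw [h_ind, integral_indicator_one .of_discrete, h_tail, probReal_compl_eq_one_sub .of_discrete,
    sum_measureReal_singleton]

end ProbabilityTheory

theorem expectation_poisson_ratio_indicator_gt_general {Ω : Type*} [MeasurableSpace Ω]
    (μ : Measure Ω) [IsProbabilityMeasure μ]
    (m c : ℕ)
    (lam : Fin m → NNReal)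
    (Z : Fin m → Ω → ℕ)
    (hindep : iIndepFun Z μ)
    (hZ : ∀ j, Measure.map (Z j) μ = poissonMeasure (lam j))
    (l : Fin m) :
    ∫ ω, ((Z l ω : ℝ) / ((∑ j, Z j ω : ℕ) : ℝ)) * (if c < ∑ j, Z j ω then (1 : ℝ) else 0) ∂μ =
      ((lam l : ℝ) / (∑ j, (lam j : ℝ))) *
        (1 - ∑ h ∈ Finset.range (c + 1),
          (∑ j, (lam j : ℝ)) ^ h * Real.exp (-(∑ j, (lam j : ℝ))) / (Nat.factorial h)) := by
  have hZ_law : ∀ j, HasLaw (Z j) Po(lam j) μ := fun j =>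
    ⟨aemeasurable_of_map_neZero (by rw [hZ j]; infer_instance), hZ j⟩
  set s := Finset.univ.erase l
  have h_indep : IndepFun (Z l) (∑ j ∈ s, Z j) μ :=
    (hindep.indepFun_finsetSum_of_notMem₀ (fun j => (hZ_law j).aemeasurable)
      (Finset.notMem_erase l _)).symm
  have h_total : ∀ ω, ∑ j, Z j ω = Z l ω + (∑ j ∈ s, Z j) ω := fun ω => by
    rw [← Finset.add_sum_erase _ _ (Finset.mem_univ l), Finset.sum_apply]
  have h_lam : lam l + ∑ j ∈ s, lam j = ∑ j, lam j := Finset.add_sum_erase _ _ (Finset.mem_univ l)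
  simp_rw [h_total]
  refine (h_indep.integral_div_add_mul_poissonMeasure (hZ_law l)
    (hindep.hasLaw_finsetSum_poissonMeasure hZ_law s) (fun n => if c < n then 1 else 0) (by simp)
    (C := 1) (fun n => by split_ifs <;> simp)).trans ?_
  rw [h_lam, integral_ite_lt_eq_one_sub_sum_measureReal]
  simp only [poissonMeasure_real_singleton, NNReal.coe_sum, mul_comm (Real.exp _)]

/-- Let `Z_1, …, Z_m` be independent Poisson random variables with parameters
`λ_1, …, λ_m > 0`, `Λ = λ_1 + … + λ_m` and `S = Z_1 + … + Z_m`. For every `l`,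
`E[(Z_l / S) · 1_{S > c}] = (λ_l / Λ) · (1 − Σ_{h=0}^{c} Λ^h e^{−Λ} / h!)`
(with the convention `Z_l/S := 0` when `S = 0`). -/
theorem expectation_poisson_ratio_indicator_gt {Ω : Type*} [MeasurableSpace Ω]
    (μ : Measure Ω) [IsProbabilityMeasure μ]
    (m c : ℕ) (hm : 1 ≤ m) (hc : 1 ≤ c)
    (lam : Fin m → NNReal) (hlam : ∀ j, 0 < lam j)
    (Z : Fin m → Ω → ℕ)
    (hindep : iIndepFun Z μ)
    (hZ : ∀ j, Measure.map (Z j) μ = poissonMeasure (lam j))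
    (l : Fin m) :
    ∫ ω, ((Z l ω : ℝ) / ((∑ j, Z j ω : ℕ) : ℝ)) * (if c < ∑ j, Z j ω then (1 : ℝ) else 0) ∂μ =
      ((lam l : ℝ) / (∑ j, (lam j : ℝ))) *
        (1 - ∑ h ∈ Finset.range (c + 1),
          (∑ j, (lam j : ℝ)) ^ h * Real.exp (-(∑ j, (lam j : ℝ))) / (Nat.factorial h)) :=
  expectation_poisson_ratio_indicator_gt_general μ m c lam Z hindep hZ l
end

section
/- For every integer n ≥ 1 and every p ∈ [0, 1], the total variation distance between the binomial distribution Bin(n, p) and the Poisson distribution with parameter np is at most 2p, i.e. sup_{A ⊆ ℕ} |Bin(n,p)(A) − Poisson(np)(A)| ≤ 2p. -/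
/-! Stein–Chen method. Fix `0 ≤ g ≤ 1`, `λ = n p > 0` and let `c = E g(Y)` for `Y ∼ Poisson(λ)`.
The function `f = steinSolution λ g c` solves `λ f(k+1) - k f(k) = g(k) - c`, so
`E g(X) - c = E[λ f(X+1) - X f(X)]` for `X ∼ Bin(n, p)`. Splitting off the last trial,
`X = X' + ξ`, turns the right side into `λ p E[f(X'+2) - f(X'+1)]`, and log-concavity of the
Poisson weights gives `|f(k+2) - f(k+1)| ≤ 1/λ`. Hence `|E g(X) - E g(Y)| ≤ p`. -/

open MeasureTheory ProbabilityTheory Finset Real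
open scoped Nat

noncomputable section

def poissonWeight (r : ℝ) (k : ℕ) : ℝ := exp (-r) * r ^ k / k !

def poissonExpectation (r : ℝ) (g : ℕ → ℝ) : ℝ := ∑' k, poissonWeight r k * g k

variable {r : ℝ}

lemma poissonWeight_nonneg (hr : 0 ≤ r) (k : ℕ) : 0 ≤ poissonWeight r k := by
  unfold poissonWeight; positivity

lemma poissonWeight_pos (hr : 0 < r) (k : ℕ) : 0 < poissonWeight r k := by
  unfold poissonWeight; positivity

lemma poissonWeight_succ (r : ℝ) (k : ℕ) :
    poissonWeight r (k + 1) = r / (k + 1) * poissonWeight r k := by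
  simp only [poissonWeight, Nat.factorial_succ, pow_succ, Nat.cast_mul]
  push_cast
  field_simp

lemma succ_mul_poissonWeight_succ (r : ℝ) (k : ℕ) :
    (k + 1) * poissonWeight r (k + 1) = r * poissonWeight r k := by
  rw [poissonWeight_succ]
  field_simp

lemma hasSum_poissonWeight (hr : 0 ≤ r) : HasSum (poissonWeight r) 1 :=
  hasSum_one_poissonMeasure ⟨r, hr⟩

/-- Log-concavity: the ratio `poissonWeight r (k + 1) / poissonWeight r k = r / (k + 1)` is
antitone in `k`. -/
lemma poissonWeight_mul_poissonWeight_succ_le (hr : 0 ≤ r) {a b : ℕ} (hab : a ≤ b) :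
    poissonWeight r a * poissonWeight r (b + 1) ≤ poissonWeight r (a + 1) * poissonWeight r b := by
  rw [poissonWeight_succ, poissonWeight_succ, mul_left_comm, mul_assoc]
  have := mul_nonneg (poissonWeight_nonneg hr a) (poissonWeight_nonneg hr b)
  gcongr

lemma poissonWeight_succ_mul_sum_le (hr : 0 ≤ r) (k : ℕ) :
    poissonWeight r (k + 1) * ∑ j ∈ range (k + 1), poissonWeight r j
      ≤ poissonWeight r k * ∑ j ∈ range (k + 2), poissonWeight r j :=
  calc poissonWeight r (k + 1) * ∑ j ∈ range (k + 1), poissonWeight r j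
      ≤ poissonWeight r k * ∑ j ∈ range (k + 1), poissonWeight r (j + 1) := by
        rw [mul_sum, mul_sum]
        refine sum_le_sum fun j hj ↦ ?_
        rw [mul_comm, mul_comm (poissonWeight r k)]
        exact poissonWeight_mul_poissonWeight_succ_le hr (Nat.lt_succ_iff.mp (mem_range.mp hj))
    _ ≤ poissonWeight r k * ∑ j ∈ range (k + 2), poissonWeight r j := by
        rw [sum_range_succ' _ (k + 1)]
        have := poissonWeight_nonneg hr k
        gcongr
        exact le_add_of_nonneg_right (poissonWeight_nonneg hr 0)

lemma poissonWeight_mul_one_sub_sum_le (hr : 0 ≤ r) (k : ℕ) :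
    poissonWeight r k * (1 - ∑ j ∈ range (k + 2), poissonWeight r j)
      ≤ poissonWeight r (k + 1) * (1 - ∑ j ∈ range (k + 1), poissonWeight r j) := by
  have tail (m : ℕ) :
      HasSum (fun i ↦ poissonWeight r (i + m)) (1 - ∑ j ∈ range m, poissonWeight r j) :=
    (hasSum_nat_add_iff' m).mpr (hasSum_poissonWeight hr)
  refine hasSum_le (fun i ↦ ?_) ((tail (k + 2)).mul_left _) ((tail (k + 1)).mul_left _)
  rw [show i + (k + 2) = i + (k + 1) + 1 by ring]
  exact poissonWeight_mul_poissonWeight_succ_le hr (by omega)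

/-- With `π = poissonWeight r`, and since `k π k = r π (k - 1)`, this is the classical solution
`(∑ j < k, π j (g j - c)) / (r π (k - 1))` of the Stein equation `r f (k + 1) - k f k = g k - c`.
Its value at `k = 0` is `0 / 0 = 0` and only ever gets multiplied by `0`. -/
def steinSolution (r : ℝ) (g : ℕ → ℝ) (c : ℝ) (k : ℕ) : ℝ :=
  (∑ j ∈ range k, poissonWeight r j * (g j - c)) / (k * poissonWeight r k)

lemma stein_equation_steinSolution (hr : 0 < r) (g : ℕ → ℝ) (c : ℝ) (k : ℕ) :
    r * steinSolution r g c (k + 1) - k * steinSolution r g c k = g k - c := by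
  have hπ := (poissonWeight_pos hr k).ne'
  have hk : k * steinSolution r g c k = (∑ j ∈ range k, poissonWeight r j * (g j - c)) /
      poissonWeight r k := by
    rcases k.eq_zero_or_pos with rfl | hk
    · simp
    rw [steinSolution]
    field_simp
  have hk1 : r * steinSolution r g c (k + 1) =
      (∑ j ∈ range (k + 1), poissonWeight r j * (g j - c)) / poissonWeight r k := by
    rw [steinSolution, Nat.cast_succ, succ_mul_poissonWeight_succ]
    field_simp
  rw [hk, hk1, sum_range_succ]
  field_simp
  ring

lemma steinSolution_one_sub (r : ℝ) (g : ℕ → ℝ) (c : ℝ) :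
    steinSolution r (fun j ↦ 1 - g j) (1 - c) = -steinSolution r g c := by
  ext k
  simp only [steinSolution, Pi.neg_apply, ← neg_div, ← sum_neg_distrib]
  congr 1
  exact sum_congr rfl fun j _ ↦ by ring

variable {g : ℕ → ℝ} {c : ℝ}

lemma steinSolution_succ_sub_le (hr : 0 < r) (hg₀ : ∀ j, 0 ≤ g j) (hg₁ : ∀ j, g j ≤ 1) (k : ℕ)
    (hc : ∑ j ∈ range (k + 2), poissonWeight r j * g j ≤ c) :
    steinSolution r g c (k + 2) - steinSolution r g c (k + 1) ≤ 1 / r := by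
  set p₀ := poissonWeight r k
  set p₁ := poissonWeight r (k + 1)
  set a := ∑ j ∈ range (k + 1), poissonWeight r j
  set G := ∑ j ∈ range (k + 1), poissonWeight r j * g j
  have hp₀ : 0 < p₀ := poissonWeight_pos hr k
  have hp₁ : 0 < p₁ := poissonWeight_pos hr (k + 1)
  have solution_eq (m : ℕ) : steinSolution r g c (m + 1) =
      (∑ j ∈ range (m + 1), poissonWeight r j * g j
        - (∑ j ∈ range (m + 1), poissonWeight r j) * c) / (r * poissonWeight r m) := by
    rw [steinSolution, Nat.cast_succ, succ_mul_poissonWeight_succ, sum_mul, ← sum_sub_distrib]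
    simp only [mul_sub]
  have hf₁ : steinSolution r g c (k + 1) = (G - a * c) / (r * p₀) := solution_eq k
  have hf₂ : steinSolution r g c (k + 2) = (G + p₁ * g (k + 1) - (a + p₁) * c) / (r * p₁) := by
    rw [solution_eq (k + 1), sum_range_succ _ (k + 1), sum_range_succ (poissonWeight r) (k + 1)]
  have hI : 0 ≤ p₀ * (a + p₁) - p₁ * a := by
    have := poissonWeight_succ_mul_sum_le hr.le k
    rw [sum_range_succ _ (k + 1)] at this
    linarith
  have hD : 0 ≤ p₁ * (1 - a) - p₀ * (1 - a - p₁) := by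
    have := poissonWeight_mul_one_sub_sum_le hr.le k
    rw [sum_range_succ _ (k + 1)] at this
    linarith
  have hG : 0 ≤ G := sum_nonneg fun j _ ↦ mul_nonneg (poissonWeight_nonneg hr.le j) (hg₀ j)
  have hH : 0 ≤ c - G - p₁ * g (k + 1) := by
    rw [sum_range_succ _ (k + 1)] at hc
    linarith
  -- `p₀ p₁ - lhs = G hD + H hI + p₁ g(k+1) hI + p₁ p₀ (1 - g(k+1))` with `H = c - G - p₁ g(k+1)`
  have key : p₀ * (G + p₁ * g (k + 1) - (a + p₁) * c) - p₁ * (G - a * c) ≤ p₀ * p₁ := by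
    nlinarith [mul_nonneg hG hD, mul_nonneg hH hI, mul_nonneg (mul_nonneg hp₁.le (hg₀ (k + 1))) hI,
      mul_nonneg (mul_nonneg hp₁.le (sub_nonneg.mpr (hg₁ (k + 1)))) hp₀.le]
  calc steinSolution r g c (k + 2) - steinSolution r g c (k + 1)
      = (p₀ * (G + p₁ * g (k + 1) - (a + p₁) * c) - p₁ * (G - a * c)) / (r * (p₀ * p₁)) := by
        rw [hf₁, hf₂]
        field_simp
    _ ≤ p₀ * p₁ / (r * (p₀ * p₁)) := by gcongr
    _ = 1 / r := by field_simp

lemma abs_steinSolution_succ_sub_le (hr : 0 < r) (hg₀ : ∀ j, 0 ≤ g j) (hg₁ : ∀ j, g j ≤ 1)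
    (hc : HasSum (fun j ↦ poissonWeight r j * g j) c) (k : ℕ) :
    |steinSolution r g c (k + 2) - steinSolution r g c (k + 1)| ≤ 1 / r := by
  have hc' : HasSum (fun j ↦ poissonWeight r j * (1 - g j)) (1 - c) := by
    simpa only [mul_sub, mul_one] using (hasSum_poissonWeight hr.le).sub hc
  have upper := steinSolution_succ_sub_le hr hg₀ hg₁ k
    (sum_le_hasSum _ (fun j _ ↦ mul_nonneg (poissonWeight_nonneg hr.le j) (hg₀ j)) hc)
  have lower := steinSolution_succ_sub_le hr (g := fun j ↦ 1 - g j) (fun j ↦ sub_nonneg.mpr (hg₁ j))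
    (fun j ↦ sub_le_self 1 (hg₀ j)) k
    (sum_le_hasSum _ (fun j _ ↦ mul_nonneg (poissonWeight_nonneg hr.le j)
      (sub_nonneg.mpr (hg₁ j))) hc')
  rw [steinSolution_one_sub, Pi.neg_apply, Pi.neg_apply] at lower
  exact abs_le.mpr ⟨by linarith, upper⟩

def binomialWeight (n : ℕ) (p : ℝ) (k : ℕ) : ℝ := n.choose k * p ^ k * (1 - p) ^ (n - k)

def binomialExpectation (n : ℕ) (p : ℝ) (g : ℕ → ℝ) : ℝ :=
  ∑ k ∈ range (n + 1), binomialWeight n p k * g k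

lemma binomialWeight_nonneg {p : ℝ} (hp₀ : 0 ≤ p) (hp₁ : p ≤ 1) (n k : ℕ) :
    0 ≤ binomialWeight n p k := by
  have : 0 ≤ 1 - p := sub_nonneg.mpr hp₁
  unfold binomialWeight; positivity

lemma sum_binomialWeight (n : ℕ) (p : ℝ) : ∑ k ∈ range (n + 1), binomialWeight n p k = 1 := by
  have := add_pow p (1 - p) n
  rw [add_sub_cancel, one_pow] at this
  rw [this]
  exact sum_congr rfl fun k _ ↦ by rw [binomialWeight]; ring

lemma binomialWeight_succ_zero (n : ℕ) (p : ℝ) :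
    binomialWeight (n + 1) p 0 = (1 - p) * binomialWeight n p 0 := by
  simp [binomialWeight, pow_succ, mul_comm]

lemma binomialWeight_succ_succ (n : ℕ) (p : ℝ) (k : ℕ) :
    binomialWeight (n + 1) p (k + 1) = (1 - p) * binomialWeight n p (k + 1)
      + p * binomialWeight n p k := by
  simp only [binomialWeight, Nat.choose_succ_succ, Nat.cast_add, Nat.add_sub_add_right]
  rcases lt_or_ge k n with hk | hk
  · obtain ⟨m, rfl⟩ := Nat.exists_eq_add_of_lt hk
    rw [show k + m + 1 - k = m + 1 by omega, show k + m + 1 - (k + 1) = m by omega]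
    ring
  · rw [Nat.choose_eq_zero_of_lt (Nat.lt_succ_of_le hk)]
    ring

lemma binomialWeight_succ_self (n : ℕ) (p : ℝ) : binomialWeight n p (n + 1) = 0 := by
  simp [binomialWeight]

lemma succ_mul_binomialWeight_succ (n : ℕ) (p : ℝ) (k : ℕ) :
    (k + 1) * binomialWeight (n + 1) p (k + 1) = (n + 1) * p * binomialWeight n p k := by
  have := congrArg (Nat.cast (R := ℝ)) (Nat.add_one_mul_choose_eq n k)
  push_cast at this
  simp only [binomialWeight, Nat.add_sub_add_right]
  linear_combination (-(p ^ (k + 1) * (1 - p) ^ (n - k))) * this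

lemma binomialExpectation_sub (n : ℕ) (p : ℝ) (g h : ℕ → ℝ) :
    binomialExpectation n p (fun k ↦ g k - h k)
      = binomialExpectation n p g - binomialExpectation n p h := by
  simp only [binomialExpectation, mul_sub, sum_sub_distrib]

lemma binomialExpectation_const_mul (n : ℕ) (p a : ℝ) (g : ℕ → ℝ) :
    binomialExpectation n p (fun k ↦ a * g k) = a * binomialExpectation n p g := by
  simp only [binomialExpectation, mul_sum]
  exact sum_congr rfl fun k _ ↦ by ring

lemma binomialExpectation_sub_const (n : ℕ) (p c : ℝ) (g : ℕ → ℝ) :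
    binomialExpectation n p (fun k ↦ g k - c) = binomialExpectation n p g - c := by
  simp only [binomialExpectation, mul_sub, sum_sub_distrib, ← sum_mul, sum_binomialWeight, one_mul]

/-- Conditioning on the outcome of the last trial. -/
lemma binomialExpectation_succ (n : ℕ) (p : ℝ) (g : ℕ → ℝ) :
    binomialExpectation (n + 1) p g
      = (1 - p) * binomialExpectation n p g + p * binomialExpectation n p (fun k ↦ g (k + 1)) := by
  have hn : binomialExpectation n p g = ∑ k ∈ range (n + 2), binomialWeight n p k * g k := by
    rw [sum_range_succ, binomialWeight_succ_self, zero_mul, add_zero, binomialExpectation]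
  rw [hn, binomialExpectation, binomialExpectation, sum_range_succ', sum_range_succ' _ (n + 1),
    mul_add, mul_sum, mul_sum, binomialWeight_succ_zero]
  simp only [binomialWeight_succ_succ, add_mul, sum_add_distrib, mul_assoc]
  ring

lemma binomialExpectation_succ_natCast_mul (n : ℕ) (p : ℝ) (g : ℕ → ℝ) :
    binomialExpectation (n + 1) p (fun k ↦ k * g k)
      = (n + 1) * p * binomialExpectation n p (fun k ↦ g (k + 1)) := by
  rw [binomialExpectation, sum_range_succ', binomialExpectation, mul_sum]
  simp only [Nat.cast_zero, zero_mul, mul_zero, add_zero, Nat.cast_succ]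
  refine sum_congr rfl fun k _ ↦ ?_
  linear_combination g (k + 1) * succ_mul_binomialWeight_succ n p k

lemma abs_binomialExpectation_le {n : ℕ} {p : ℝ} (hp₀ : 0 ≤ p) (hp₁ : p ≤ 1) {g : ℕ → ℝ} {M : ℝ}
    (hg : ∀ k, |g k| ≤ M) : |binomialExpectation n p g| ≤ M :=
  calc |binomialExpectation n p g|
      ≤ ∑ k ∈ range (n + 1), binomialWeight n p k * |g k| := by
        refine (abs_sum_le_sum_abs _ _).trans_eq (sum_congr rfl fun k _ ↦ ?_)
        rw [abs_mul, abs_of_nonneg (binomialWeight_nonneg hp₀ hp₁ n k)]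
    _ ≤ ∑ k ∈ range (n + 1), binomialWeight n p k * M :=
        sum_le_sum fun k _ ↦ mul_le_mul_of_nonneg_left (hg k) (binomialWeight_nonneg hp₀ hp₁ n k)
    _ = M := by rw [← sum_mul, sum_binomialWeight, one_mul]

lemma binomialExpectation_stein_operator (n : ℕ) (p : ℝ) (f : ℕ → ℝ) :
    binomialExpectation (n + 1) p (fun k ↦ (n + 1) * p * f (k + 1) - k * f k)
      = (n + 1) * p * p * binomialExpectation n p (fun k ↦ f (k + 2) - f (k + 1)) := by
  rw [binomialExpectation_sub, binomialExpectation_const_mul, binomialExpectation_succ_natCast_mul,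
    binomialExpectation_succ, binomialExpectation_sub]
  ring

lemma binomialExpectation_of_mul_eq_zero {n : ℕ} {p : ℝ} (h : (n : ℝ) * p = 0) (g : ℕ → ℝ) :
    binomialExpectation n p g = g 0 := by
  rcases mul_eq_zero.mp h with hn | rfl
  · obtain rfl : n = 0 := by exact_mod_cast hn
    simp [binomialExpectation, binomialWeight]
  · rw [binomialExpectation, sum_eq_single 0 (fun k _ hk ↦ by simp [binomialWeight, hk])
      (by simp)]
    simp [binomialWeight]

lemma poissonExpectation_zero (g : ℕ → ℝ) : poissonExpectation 0 g = g 0 := by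
  rw [poissonExpectation, tsum_eq_single 0 (fun k hk ↦ by simp [poissonWeight, hk])]
  simp [poissonWeight]

theorem abs_binomialExpectation_sub_poissonExpectation_le (n : ℕ) {p : ℝ} (hp₀ : 0 ≤ p)
    (hp₁ : p ≤ 1) {g : ℕ → ℝ} (hg₀ : ∀ k, 0 ≤ g k) (hg₁ : ∀ k, g k ≤ 1) :
    |binomialExpectation n p g - poissonExpectation (n * p) g| ≤ p := by
  by_cases hnp : (n : ℝ) * p = 0
  · rw [binomialExpectation_of_mul_eq_zero hnp, hnp, poissonExpectation_zero, sub_self, abs_zero]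
    exact hp₀
  obtain ⟨m, rfl⟩ : ∃ m, n = m + 1 := Nat.exists_eq_succ_of_ne_zero (by rintro rfl; simp at hnp)
  push_cast at hnp ⊢
  set r := (m + 1 : ℝ) * p
  have hr : 0 < r := (mul_nonneg (by positivity) hp₀).lt_of_ne' hnp
  have hp : 0 < p := pos_of_mul_pos_right hr (by positivity)
  have hc : HasSum (fun j ↦ poissonWeight r j * g j) (poissonExpectation r g) :=
    (Summable.of_nonneg_of_le (fun j ↦ mul_nonneg (poissonWeight_nonneg hr.le j) (hg₀ j))
      (fun j ↦ mul_le_of_le_one_right (poissonWeight_nonneg hr.le j) (hg₁ j))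
      (hasSum_poissonWeight hr.le).summable).hasSum
  set f := steinSolution r g (poissonExpectation r g)
  have stein : binomialExpectation (m + 1) p g - poissonExpectation r g
      = r * p * binomialExpectation m p (fun k ↦ f (k + 2) - f (k + 1)) := by
    rw [← binomialExpectation_sub_const, ← binomialExpectation_stein_operator]
    exact congrArg _ (funext fun k ↦ (stein_equation_steinSolution hr g _ k).symm)
  rw [stein, abs_mul, abs_of_pos (mul_pos hr hp)]
  calc r * p * |binomialExpectation m p (fun k ↦ f (k + 2) - f (k + 1))|
      ≤ r * p * (1 / r) := by
        gcongr
        exact abs_binomialExpectation_le hp₀ hp₁ (abs_steinSolution_succ_sub_le hr hg₀ hg₁ hc)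
    _ = p := by field_simp

lemma integral_poissonMeasure_eq_poissonExpectation (r : NNReal) (g : ℕ → ℝ) :
    ∫ k, g k ∂poissonMeasure r = poissonExpectation r g := by
  simp [integral_poissonMeasure, poissonExpectation, poissonWeight]

lemma integral_map_val_binomial (p : NNReal) (hp : p ≤ 1) (n : ℕ) (g : ℕ → ℝ) :
    ∫ k, g k ∂(Measure.map Fin.val (PMF.binomial p hp n).toMeasure)
      = binomialExpectation n p g := by
  rw [integral_map (measurable_of_countable _).aemeasurable
    StronglyMeasurable.of_discrete.aestronglyMeasurable, PMF.integral_eq_sum, binomialExpectation,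
    ← Fin.sum_univ_eq_sum_range]
  refine sum_congr rfl fun k _ ↦ ?_
  rw [smul_eq_mul, PMF.binomial_apply, binomialWeight]
  congr 1
  simp [ENNReal.toReal_sub_of_le (ENNReal.coe_le_one_iff.mpr hp)]
  ring

end

/-- For every integer `n ≥ 1` and every `p ∈ [0, 1]`, the total variation distance between
the binomial distribution `Bin(n, p)` (as a measure on `ℕ`) and the Poisson distribution
with parameter `np` is at most `2p`:
`sup_{A ⊆ ℕ} |Bin(n,p)(A) − Poisson(np)(A)| ≤ 2p`. -/
theorem tv_binomial_poisson_le {n : ℕ} (p : NNReal) (hp : p ≤ 1) (A : Set ℕ) :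
    |((Measure.map (Fin.val)
        ((PMF.binomial p (by exact_mod_cast hp) n).toMeasure)) A).toReal -
      ((poissonMeasure ((n : NNReal) * p)) A).toReal| ≤ 2 * (p : ℝ) := by
  rw [← measureReal_def, ← measureReal_def, ← integral_indicator_one MeasurableSet.of_discrete,
    ← integral_indicator_one MeasurableSet.of_discrete, integral_map_val_binomial,
    integral_poissonMeasure_eq_poissonExpectation, NNReal.coe_mul, NNReal.coe_natCast]
  calc _ ≤ (p : ℝ) := abs_binomialExpectation_sub_poissonExpectation_le n p.coe_nonneg
        (by exact_mod_cast hp) (Set.indicator_nonneg fun _ _ ↦ zero_le_one' ℝ)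
        (Set.indicator_le_self' fun _ _ ↦ zero_le_one' ℝ)
    _ ≤ 2 * p := by linarith [p.coe_nonneg]
end

section
/- Let m ≥ 1 and c ≥ 1 be integers, and for j ∈ {1, …, m} let Z_j be independent binomial random variables, Z_j ∼ Bin(M_j, p_j) with M_j ∈ ℕ, p_j ∈ [0, 1]. Set λ_j = M_j p_j, Λ = Σ_{j=1}^{m} λ_j, and S = Z_1 + … + Z_m, and assume Λ > 0. Then for every l ∈ {1, …, m}, | E[Z_l · 1_{S ≤ c} + c (Z_l / S) 1_{S > c}] − (λ_l / Λ)(c − Σ_{h=0}^{c} (c−h) Λ^h e^{−Λ} / h!) | ≤ 2c · Σ_{j=1}^{m} M_j p_j². -/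
/-!
With `g s = 1` for `s ≤ c` and `g s = c / s` otherwise (`couponShare c s`), the integrand is
`Z_l g(S)`, a function of `Z` bounded by `c`. Replacing the binomial laws by the Poisson laws with
the same means, one coordinate at a time, changes its expectation by at most `c` times the sum of
the `ℓ¹` distances between `Bin(M_j, p_j)` and `Poi(M_j p_j)`, and Le Cam's convolution argument
bounds each of these by `2 M_j p_j²`. For independent `X_j ∼ Poi(λ_j)` the expectation is exact:
`S` is `Poi(Λ)`, and size biasing gives `E[X_l g(S)] = λ_l E[g(S + 1)] = (λ_l / Λ) E[S g(S)]`
with `S g(S) = min(S, c)`.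
-/

open MeasureTheory ProbabilityTheory Finset Real
open scoped Nat

noncomputable def binomialSeq (M : ℕ) (p : ℝ) (k : ℕ) : ℝ :=
  M.choose k * p ^ k * (1 - p) ^ (M - k)

noncomputable def poissonSeq (r : ℝ) (k : ℕ) : ℝ := exp (-r) * r ^ k / k !

def convSeq (a b : ℕ → ℝ) (n : ℕ) : ℝ := ∑ kl ∈ antidiagonal n, a kl.1 * b kl.2

noncomputable def couponShare (c s : ℕ) : ℝ := if s ≤ c then 1 else c / s

lemma binomialSeq_nonneg {p : ℝ} (hp₀ : 0 ≤ p) (hp₁ : p ≤ 1) (M k : ℕ) :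
    0 ≤ binomialSeq M p k := by
  have : 0 ≤ 1 - p := by linarith
  unfold binomialSeq; positivity

lemma binomialSeq_eq_zero_of_lt {M k : ℕ} (h : M < k) (p : ℝ) : binomialSeq M p k = 0 := by
  simp [binomialSeq, Nat.choose_eq_zero_of_lt h]

lemma hasSum_binomialSeq (M : ℕ) (p : ℝ) : HasSum (binomialSeq M p) 1 := by
  have h : HasSum (binomialSeq M p) (∑ k ∈ range (M + 1), binomialSeq M p k) :=
    hasSum_sum_of_ne_finset_zero fun k hk => binomialSeq_eq_zero_of_lt (by simpa using hk) p
  convert h using 1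
  calc (1 : ℝ) = (p + (1 - p)) ^ M := by rw [add_sub_cancel, one_pow]
    _ = _ := by rw [add_pow]; exact sum_congr rfl fun k _ => by rw [binomialSeq]; ring

lemma binomialSeq_eq_coeff (M : ℕ) (p : ℝ) (k : ℕ) :
    binomialSeq M p k = ((Polynomial.C p * .X + .C (1 - p)) ^ M).coeff k := by
  open Polynomial in
  have hterm : ∀ m, (C p * X) ^ m * C (1 - p) ^ (M - m) * (M.choose m : ℝ[X]) =
      C (M.choose m * p ^ m * (1 - p) ^ (M - m)) * X ^ m := fun m => by
    simp only [map_mul, map_pow, map_natCast]; ring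
  simp only [add_pow, hterm, Polynomial.finsetSum_coeff, Polynomial.coeff_C_mul_X_pow,
    sum_ite_eq, mem_range]
  split_ifs with h
  · rfl
  · exact binomialSeq_eq_zero_of_lt (by omega) p

lemma binomialSeq_succ (M : ℕ) (p : ℝ) :
    binomialSeq (M + 1) p = convSeq (binomialSeq 1 p) (binomialSeq M p) := by
  ext n
  rw [binomialSeq_eq_coeff, pow_succ', Polynomial.coeff_mul, convSeq]
  simp only [binomialSeq_eq_coeff, pow_one]

lemma poissonSeq_nonneg {r : ℝ} (hr : 0 ≤ r) (k : ℕ) : 0 ≤ poissonSeq r k := by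
  unfold poissonSeq; positivity

lemma hasSum_poissonSeq (r : ℝ) : HasSum (poissonSeq r) 1 := by
  have := (NormedSpace.expSeries_div_hasSum_exp r).mul_left (exp (-r))
  rw [← exp_eq_exp_ℝ, ← exp_add, neg_add_cancel, exp_zero] at this
  unfold poissonSeq
  simpa only [mul_div_assoc] using this

lemma poissonSeq_succ_mul (r : ℝ) (k : ℕ) :
    (k + 1 : ℝ) * poissonSeq r (k + 1) = r * poissonSeq r k := by
  rw [poissonSeq, poissonSeq, Nat.factorial_succ, pow_succ]
  push_cast
  field_simp

lemma convSeq_poissonSeq (r s : ℝ) :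
    convSeq (poissonSeq r) (poissonSeq s) = poissonSeq (r + s) := by
  ext n
  rw [convSeq, poissonSeq, (Commute.all r s).add_pow', neg_add, exp_add, mul_sum, sum_div]
  refine sum_congr rfl fun kl hkl => ?_
  obtain rfl : kl.1 + kl.2 = n := mem_antidiagonal.mp hkl
  rw [nsmul_eq_mul, Nat.cast_choose ℝ (Nat.le_add_right _ _), Nat.add_sub_cancel_left,
    poissonSeq, poissonSeq]
  field_simp

lemma convSeq_sub_left (a a' b : ℕ → ℝ) (n : ℕ) :
    convSeq (fun k => a k - a' k) b n = convSeq a b n - convSeq a' b n := by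
  simp [convSeq, sub_mul]

lemma convSeq_sub_right (a b b' : ℕ → ℝ) (n : ℕ) :
    convSeq a (fun k => b k - b' k) n = convSeq a b n - convSeq a b' n := by
  simp [convSeq, mul_sub]

lemma abs_convSeq_le (a b : ℕ → ℝ) (n : ℕ) :
    |convSeq a b n| ≤ convSeq (fun k => |a k|) (fun k => |b k|) n :=
  (abs_sum_le_sum_abs _ _).trans_eq (sum_congr rfl fun _ _ => abs_mul _ _)

lemma summable_convSeq {a b : ℕ → ℝ} (ha : Summable a) (hb : Summable b) :
    Summable (convSeq a b) :=
  (summable_norm_sum_mul_antidiagonal_of_summable_norm ha.norm hb.norm).of_norm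

lemma tsum_abs_convSeq_le {a b : ℕ → ℝ} (ha : Summable a) (hb : Summable b) :
    ∑' n, |convSeq a b n| ≤ (∑' k, |a k|) * ∑' k, |b k| := by
  have ha' : Summable fun k => ‖|a k|‖ := by simpa only [norm_abs_eq_norm] using ha.norm
  have hb' : Summable fun k => ‖|b k|‖ := by simpa only [norm_abs_eq_norm] using hb.norm
  calc ∑' n, |convSeq a b n| ≤ ∑' n, convSeq (fun k => |a k|) (fun k => |b k|) n :=
        (summable_convSeq ha hb).abs.tsum_le_tsum (abs_convSeq_le a b)
          (summable_convSeq ha.abs hb.abs)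
    _ = (∑' k, |a k|) * ∑' k, |b k| :=
        (tsum_mul_tsum_eq_tsum_sum_antidiagonal_of_summable_norm ha' hb').symm

lemma tsum_abs_eq_one_of_hasSum {a : ℕ → ℝ} (ha₀ : ∀ k, 0 ≤ a k) (ha : HasSum a 1) :
    ∑' k, |a k| = 1 := by
  simp_rw [abs_of_nonneg (ha₀ _), ha.tsum_eq]

lemma tsum_abs_binomialSeq_one_sub_poissonSeq_le {p : ℝ} (hp : 0 ≤ p) :
    ∑' k, |binomialSeq 1 p k - poissonSeq p k| ≤ 2 * p ^ 2 := by
  have hpoi := hasSum_poissonSeq p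
  have hs := ((hasSum_binomialSeq 1 p).summable.sub hpoi.summable).abs
  have hvanish : ∀ k, |binomialSeq 1 p (k + 2) - poissonSeq p (k + 2)| = poissonSeq p (k + 2) :=
    fun k => by
      rw [binomialSeq_eq_zero_of_lt (by omega), zero_sub, abs_neg,
        abs_of_nonneg (poissonSeq_nonneg hp _)]
  have htail := (hpoi.summable.sum_add_tsum_nat_add 2).trans hpoi.tsum_eq
  rw [← hs.sum_add_tsum_nat_add 2, tsum_congr hvanish]
  simp only [sum_range_succ, sum_range_zero, zero_add] at htail ⊢
  have hexp : 1 - p ≤ exp (-p) := by linarith [add_one_le_exp (-p)]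
  have hexp' : exp (-p) ≤ 1 := exp_le_one_iff.mpr (by linarith)
  -- the distance is exactly `2 p (1 - exp (-p))`
  simp only [binomialSeq, poissonSeq] at htail ⊢
  norm_num at htail ⊢
  rw [abs_of_nonpos (by linarith), abs_of_nonneg (by nlinarith)]
  nlinarith

theorem tsum_abs_binomialSeq_sub_poissonSeq_le (M : ℕ) {p : ℝ} (hp₀ : 0 ≤ p)
    (hp₁ : p ≤ 1) :
    ∑' k, |binomialSeq M p k - poissonSeq (M * p) k| ≤ 2 * M * p ^ 2 := by
  induction M with
  | zero =>
    have h : binomialSeq 0 p = poissonSeq ((0 : ℕ) * p) := by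
      ext k; cases k <;> simp [binomialSeq, poissonSeq]
    simp [h]
  | succ M ih =>
    set d₁ := fun k => binomialSeq 1 p k - poissonSeq p k
    set d := fun k => binomialSeq M p k - poissonSeq (M * p) k
    have hsplit : ∀ k, binomialSeq (M + 1) p k - poissonSeq ((M + 1 : ℕ) * p) k =
        convSeq d₁ (binomialSeq M p) k + convSeq (poissonSeq p) d k := fun k => by
      rw [convSeq_sub_left, convSeq_sub_right, ← binomialSeq_succ, convSeq_poissonSeq]
      push_cast; ring_nf
    have hbin := hasSum_binomialSeq M p
    have hpoi := hasSum_poissonSeq p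
    have hd₁ : Summable d₁ := (hasSum_binomialSeq 1 p).summable.sub hpoi.summable
    have hd : Summable d := hbin.summable.sub (hasSum_poissonSeq _).summable
    have hconv₁ := (summable_convSeq hd₁ hbin.summable).abs
    have hconv₂ := (summable_convSeq hpoi.summable hd).abs
    calc ∑' k, |binomialSeq (M + 1) p k - poissonSeq ((M + 1 : ℕ) * p) k|
        ≤ ∑' k, (|convSeq d₁ (binomialSeq M p) k| + |convSeq (poissonSeq p) d k|) := by
          refine Summable.tsum_le_tsum (fun k => ?_) ?_ (hconv₁.add hconv₂)
          · rw [hsplit]; exact abs_add_le _ _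
          · exact ((hasSum_binomialSeq _ p).summable.sub (hasSum_poissonSeq _).summable).abs
      _ ≤ (∑' k, |d₁ k|) * (∑' k, |binomialSeq M p k|) +
          (∑' k, |poissonSeq p k|) * ∑' k, |d k| := by
          rw [hconv₁.tsum_add hconv₂]
          exact add_le_add (tsum_abs_convSeq_le hd₁ hbin.summable)
            (tsum_abs_convSeq_le hpoi.summable hd)
      _ ≤ 2 * (M + 1 : ℕ) * p ^ 2 := by
          rw [tsum_abs_eq_one_of_hasSum (binomialSeq_nonneg hp₀ hp₁ M) hbin,
            tsum_abs_eq_one_of_hasSum (poissonSeq_nonneg hp₀) hpoi]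
          have := tsum_abs_binomialSeq_one_sub_poissonSeq_le hp₀
          push_cast; linarith

section ProductComparison

variable {α β : Type*}

lemma summable_mul_of_abs_le {w : β → ℝ} {f : β → ℝ} {C : ℝ} (hw : Summable w)
    (hf : ∀ x, |f x| ≤ C) : Summable fun x => w x * f x :=
  (hw.abs.mul_right C).of_norm_bounded fun x => by
    rw [norm_mul, Real.norm_eq_abs, Real.norm_eq_abs]
    exact mul_le_mul_of_nonneg_left (hf x) (abs_nonneg _)

lemma abs_tsum_mul_le {w : β → ℝ} (hw₀ : ∀ x, 0 ≤ w x) (hw : HasSum w 1) {f : β → ℝ}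
    {C : ℝ} (hf : ∀ x, |f x| ≤ C) : |∑' x, w x * f x| ≤ C := by
  have hs := summable_mul_of_abs_le hw.summable hf
  calc |∑' x, w x * f x| ≤ ∑' x, |w x * f x| := by
        simpa only [Real.norm_eq_abs] using norm_tsum_le_tsum_norm hs.norm
    _ ≤ ∑' x, w x * C := hs.abs.tsum_le_tsum (fun x => by
        rw [abs_mul, abs_of_nonneg (hw₀ x)]; exact mul_le_mul_of_nonneg_left (hf x) (hw₀ x))
        (hw.summable.mul_right C)
    _ = C := by rw [tsum_mul_right, hw.tsum_eq, one_mul]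

lemma abs_tsum_mul_sub_tsum_mul_le {a b u v : β → ℝ} {C D : ℝ} (ha : Summable a)
    (hb₀ : ∀ k, 0 ≤ b k) (hb : HasSum b 1) (hu : ∀ k, |u k| ≤ C)
    (huv : ∀ k, |u k - v k| ≤ D) :
    |∑' k, a k * u k - ∑' k, b k * v k| ≤ C * ∑' k, |a k - b k| + D := by
  have hv : ∀ k, |v k| ≤ C + D := fun k => by
    have := abs_sub_abs_le_abs_sub (v k) (u k); rw [abs_sub_comm] at this; linarith [hu k, huv k]
  have hsplit : ∑' k, a k * u k - ∑' k, b k * v k =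
      ∑' k, (a k - b k) * u k + ∑' k, b k * (u k - v k) := by
    simp only [sub_mul, mul_sub]
    rw [(summable_mul_of_abs_le ha hu).tsum_sub (summable_mul_of_abs_le hb.summable hu),
      (summable_mul_of_abs_le hb.summable hu).tsum_sub (summable_mul_of_abs_le hb.summable hv)]
    ring
  have hab := ha.sub hb.summable
  have h₁ : |∑' k, (a k - b k) * u k| ≤ C * ∑' k, |a k - b k| := by
    have hs := summable_mul_of_abs_le hab hu
    calc |∑' k, (a k - b k) * u k| ≤ ∑' k, |(a k - b k) * u k| := by
          simpa only [Real.norm_eq_abs] using norm_tsum_le_tsum_norm hs.norm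
      _ ≤ ∑' k, |a k - b k| * C := hs.abs.tsum_le_tsum (fun k => by
          rw [abs_mul]; exact mul_le_mul_of_nonneg_left (hu k) (abs_nonneg _))
          (hab.abs.mul_right C)
      _ = C * ∑' k, |a k - b k| := by rw [tsum_mul_right, mul_comm]
  rw [hsplit]
  exact (abs_add_le _ _).trans (add_le_add h₁ (abs_tsum_mul_le hb₀ hb huv))

lemma prod_apply_cons {n : ℕ} (a : Fin (n + 1) → α → ℝ) (k : α) (y : Fin n → α) :
    ∏ j, a j ((Fin.cons k y : Fin (n + 1) → α) j) = a 0 k * ∏ j, a j.succ (y j) := by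
  simp [Fin.prod_univ_succ]

lemma hasSum_prod_apply {n : ℕ} {a : Fin n → α → ℝ} (ha₀ : ∀ j k, 0 ≤ a j k)
    {s : Fin n → ℝ} (ha : ∀ j, HasSum (a j) (s j)) :
    HasSum (fun x : Fin n → α => ∏ j, a j (x j)) (∏ j, s j) := by
  induction n with
  | zero => simp
  | succ n ih =>
    have htail : HasSum (fun y : Fin n → α => ∏ j, a j.succ (y j)) (∏ j : Fin n, s j.succ) :=
      ih (fun j k => ha₀ j.succ k) (fun j => ha j.succ)
    have htail₀ : ∀ y : Fin n → α, 0 ≤ ∏ j, a j.succ (y j) := fun y =>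
      prod_nonneg fun j _ => ha₀ j.succ (y j)
    have hsummable := (ha 0).summable.mul_of_nonneg htail.summable (ha₀ 0) htail₀
    have hprod := (ha 0).mul htail hsummable
    rw [← (Fin.consEquiv fun _ : Fin (n + 1) => α).hasSum_iff, Fin.prod_univ_succ]
    exact hprod.congr_fun fun ky => prod_apply_cons a ky.1 ky.2

lemma tsum_prod_apply_mul_eq_tsum_cons {n : ℕ} {a : Fin (n + 1) → α → ℝ}
    (ha₀ : ∀ j k, 0 ≤ a j k) (ha : ∀ j, Summable (a j)) {f : (Fin (n + 1) → α) → ℝ}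
    {C : ℝ} (hf : ∀ x, |f x| ≤ C) :
    ∑' x, (∏ j, a j (x j)) * f x =
      ∑' k, a 0 k * ∑' y : Fin n → α, (∏ j, a j.succ (y j)) * f (Fin.cons k y) := by
  let e := Fin.consEquiv fun _ : Fin (n + 1) => α
  have hcons : ∀ ky : α × (Fin n → α), (∏ j, a j (e ky j)) * f (e ky) =
      a 0 ky.1 * ((∏ j, a j.succ (ky.2 j)) * f (Fin.cons ky.1 ky.2)) := fun ky => by
    rw [← mul_assoc, ← prod_apply_cons]; rfl
  have hs := summable_mul_of_abs_le (hasSum_prod_apply ha₀ fun j => (ha j).hasSum).summable hf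
  rw [← e.summable_iff] at hs
  rw [← e.tsum_eq]
  simp only [Function.comp_def] at hs
  rw [tsum_congr hcons, (hs.congr hcons).tsum_prod']
  · simp_rw [tsum_mul_left]
  · exact fun k => (summable_mul_of_abs_le (hasSum_prod_apply (fun j => ha₀ j.succ)
      fun j => (ha j.succ).hasSum).summable fun y => hf (Fin.cons k y)).mul_left (a 0 k)

theorem abs_tsum_prod_apply_mul_sub_le {n : ℕ} {a b : Fin n → α → ℝ}
    (ha₀ : ∀ j k, 0 ≤ a j k) (hb₀ : ∀ j k, 0 ≤ b j k)
    (ha : ∀ j, HasSum (a j) 1) (hb : ∀ j, HasSum (b j) 1)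
    {f : (Fin n → α) → ℝ} {C : ℝ} (hf : ∀ x, |f x| ≤ C) :
    |∑' x, (∏ j, a j (x j)) * f x - ∑' x, (∏ j, b j (x j)) * f x| ≤
      C * ∑ j, ∑' k, |a j k - b j k| := by
  induction n with
  | zero => simp
  | succ n ih =>
    rw [tsum_prod_apply_mul_eq_tsum_cons ha₀ (fun j => (ha j).summable) hf,
      tsum_prod_apply_mul_eq_tsum_cons hb₀ (fun j => (hb j).summable) hf,
      Fin.sum_univ_succ, mul_add]
    refine abs_tsum_mul_sub_tsum_mul_le (ha 0).summable (hb₀ 0) (hb 0) (fun k => ?_) fun k => ?_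
    · exact abs_tsum_mul_le (fun y => prod_nonneg fun j _ => ha₀ j.succ (y j))
        (by simpa using hasSum_prod_apply (fun j => ha₀ j.succ) fun j => ha j.succ)
        fun y => hf _
    · exact ih (fun j => ha₀ j.succ) (fun j => hb₀ j.succ) (fun j => ha j.succ)
        (fun j => hb j.succ) fun y => hf _

end ProductComparison

lemma tsum_mul_mul_eq_mul_tsum_comp {β : Type*} {σ : β → β} (hσ : σ.Injective)
    {t w : β → ℝ} {r : ℝ} (ht : ∀ x, x ∉ Set.range σ → t x = 0)
    (htw : ∀ y, t (σ y) * w (σ y) = r * w y) (G : β → ℝ) :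
    ∑' x, t x * w x * G x = r * ∑' y, w y * G (σ y) := by
  rw [← hσ.tsum_eq fun x hx => not_not.mp fun h => hx (by rw [ht x h, zero_mul, zero_mul])]
  simp_rw [htw, mul_assoc, tsum_mul_left]

lemma tsum_natCast_mul_poissonSeq_mul (r : ℝ) (G : ℕ → ℝ) :
    ∑' k : ℕ, k * poissonSeq r k * G k = r * ∑' k, poissonSeq r k * G (k + 1) := by
  refine tsum_mul_mul_eq_mul_tsum_comp Nat.succ_injective (fun k hk => ?_) (fun k => ?_) G
  · obtain rfl : k = 0 := by
      by_contra h; exact hk ⟨k - 1, Nat.succ_pred_eq_of_ne_zero h⟩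
    simp
  · push_cast; exact poissonSeq_succ_mul r k

lemma couponShare_nonneg (c s : ℕ) : 0 ≤ couponShare c s := by
  unfold couponShare; split_ifs <;> positivity

lemma couponShare_le_one (c s : ℕ) : couponShare c s ≤ 1 := by
  unfold couponShare
  split_ifs with h
  · exact le_rfl
  · exact div_le_one_of_le₀ (by exact_mod_cast (not_le.mp h).le) (Nat.cast_nonneg s)

lemma natCast_mul_couponShare (c s : ℕ) : (s : ℝ) * couponShare c s = (min s c : ℕ) := by
  unfold couponShare
  split_ifs with h
  · rw [mul_one, min_eq_left h]
  · rw [min_eq_right (by omega), mul_div_cancel₀ _ (Nat.cast_ne_zero.mpr (by omega))]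

lemma abs_natCast_mul_couponShare_le (c : ℕ) {z s : ℕ} (hz : z ≤ s) :
    |(z : ℝ) * couponShare c s| ≤ c := by
  have := couponShare_nonneg c s
  rw [abs_of_nonneg (by positivity)]
  calc (z : ℝ) * couponShare c s ≤ s * couponShare c s := by gcongr
    _ ≤ c := by rw [natCast_mul_couponShare]; exact_mod_cast min_le_right s c

lemma tsum_poissonSeq_mul_min (r : ℝ) (c : ℕ) :
    ∑' s, poissonSeq r s * (min s c : ℕ) =
      c - ∑ h ∈ range (c + 1), (c - h : ℝ) * poissonSeq r h := by
  have hmin : ∀ s, poissonSeq r s * (min s c : ℕ) =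
      poissonSeq r s * c - poissonSeq r s * (c - s : ℕ) :=
    fun s => by
      rw [← mul_sub]; congr 1
      rcases le_total s c with h | h
      · rw [min_eq_left h, Nat.cast_sub h]; ring
      · rw [min_eq_right h, Nat.sub_eq_zero_of_le h]; simp
  have hfin : ∀ s ∉ range (c + 1), poissonSeq r s * (c - s : ℕ) = 0 := fun s hs => by
    rw [Nat.sub_eq_zero_of_le (by simp at hs; omega), Nat.cast_zero, mul_zero]
  rw [tsum_congr hmin, ((hasSum_poissonSeq r).summable.mul_right _).tsum_sub
    (summable_of_ne_finset_zero hfin), tsum_mul_right, (hasSum_poissonSeq r).tsum_eq, one_mul,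
    tsum_eq_sum hfin]
  congr 1
  refine sum_congr rfl fun h hh => ?_
  rw [Nat.cast_sub (by simp at hh; omega), mul_comm]

lemma natCast_mul_couponShare_eq (c z s : ℕ) :
    (z : ℝ) * couponShare c s =
      z * (if s ≤ c then 1 else 0) + c * ((z : ℝ) / s) * (if c < s then 1 else 0) := by
  unfold couponShare
  split_ifs <;> first | omega | ring

section PoissonProduct

variable {ι : Type*} [Fintype ι]

lemma sum_piAntidiag_prod_poissonSeq [DecidableEq ι] (r : ι → ℝ) (s : ℕ) :
    ∑ x ∈ piAntidiag univ s, ∏ j, poissonSeq (r j) (x j) = poissonSeq (∑ j, r j) s := by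
  rw [poissonSeq, sum_pow_eq_sum_piAntidiag, mul_sum, sum_div]
  refine sum_congr rfl fun x hx => ?_
  have hspec := Nat.multinomial_spec univ x
  rw [(mem_piAntidiag.mp hx).1] at hspec
  simp only [poissonSeq, prod_div_distrib, prod_mul_distrib, ← exp_sum, sum_neg_distrib]
  have hmult : (Nat.multinomial univ x : ℝ) ≠ 0 :=
    Nat.cast_ne_zero.mpr (Nat.multinomial_pos _ _).ne'
  rw [← hspec]
  push_cast
  field_simp

lemma preimage_sum_singleton_eq_piAntidiag [DecidableEq ι] (s : ℕ) :
    (fun x : ι → ℕ => ∑ j, x j) ⁻¹' {s} = ↑(piAntidiag (univ : Finset ι) s) := by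
  ext x; simp

lemma tsum_preimage_sum_prod_poissonSeq_mul [DecidableEq ι] (r : ι → ℝ) (h : ℕ → ℝ)
    (s : ℕ) :
    ∑' x : (fun x : ι → ℕ => ∑ j, x j) ⁻¹' {s},
        (∏ j, poissonSeq (r j) (x.1 j)) * h (∑ j, x.1 j) =
      poissonSeq (∑ j, r j) s * h s := by
  rw [preimage_sum_singleton_eq_piAntidiag,
    tsum_subtype' _ fun x : ι → ℕ => (∏ j, poissonSeq (r j) (x j)) * h (∑ j, x j),
    ← sum_piAntidiag_prod_poissonSeq, sum_mul]
  exact sum_congr rfl fun x hx => by rw [(mem_piAntidiag.mp hx).1]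

lemma hasSum_prod_poissonSeq {r : ι → ℝ} (hr : ∀ j, 0 ≤ r j) :
    HasSum (fun x : ι → ℕ => ∏ j, poissonSeq (r j) (x j)) 1 := by
  classical
  have hfib := tsum_preimage_sum_prod_poissonSeq_mul r (fun _ => 1)
  simp only [mul_one] at hfib
  have hpart : ∀ x : ι → ℕ, ∃! s, x ∈ (fun x : ι → ℕ => ∑ j, x j) ⁻¹' {s} :=
    fun x => ⟨∑ j, x j, rfl, fun _ h => h.symm⟩
  have hw : Summable fun x : ι → ℕ => ∏ j, poissonSeq (r j) (x j) := by
    refine (summable_partition (fun x => prod_nonneg fun j _ => poissonSeq_nonneg (hr j) _)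
      hpart).mpr ⟨fun s => ?_, (hasSum_poissonSeq _).summable.congr fun s => (hfib s).symm⟩
    rw [preimage_sum_singleton_eq_piAntidiag]
    exact (piAntidiag (univ : Finset ι) s).summable
      fun x : ι → ℕ => ∏ j, poissonSeq (r j) (x j)
  have := hw.hasSum.tsum_fiberwise (fun x : ι → ℕ => ∑ j, x j)
  simp_rw [hfib] at this
  exact (hasSum_poissonSeq _).unique this ▸ hw.hasSum

theorem tsum_prod_poissonSeq_mul_comp_sum {r : ι → ℝ} (hr : ∀ j, 0 ≤ r j) {h : ℕ → ℝ}
    {C : ℝ} (hh : ∀ s, |h s| ≤ C) :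
    ∑' x : ι → ℕ, (∏ j, poissonSeq (r j) (x j)) * h (∑ j, x j) =
      ∑' s, poissonSeq (∑ j, r j) s * h s := by
  classical
  have hs := summable_mul_of_abs_le (hasSum_prod_poissonSeq hr).summable fun x => hh (∑ j, x j)
  have := hs.hasSum.tsum_fiberwise (fun x : ι → ℕ => ∑ j, x j)
  simp_rw [tsum_preimage_sum_prod_poissonSeq_mul] at this
  exact this.tsum_eq.symm

lemma tsum_apply_mul_prod_poissonSeq_mul [DecidableEq ι] (r : ι → ℝ) (l : ι)
    (G : (ι → ℕ) → ℝ) :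
    ∑' x : ι → ℕ, x l * (∏ j, poissonSeq (r j) (x j)) * G x =
      r l * ∑' y : ι → ℕ, (∏ j, poissonSeq (r j) (y j)) * G (y + Pi.single l 1) := by
  refine tsum_mul_mul_eq_mul_tsum_comp (add_left_injective _) (fun x hx => ?_) (fun y => ?_) G
  · by_contra h
    refine hx ⟨x - Pi.single l 1, funext fun j => ?_⟩
    rcases eq_or_ne j l with rfl | hj
    · simp at h ⊢; omega
    · simp [hj]
  · rw [Fintype.prod_eq_mul_prod_compl l, Fintype.prod_eq_mul_prod_compl l, ← mul_assoc,
      ← mul_assoc]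
    have hcompl : ∀ j ∈ ({l}ᶜ : Finset ι),
        poissonSeq (r j) ((y + Pi.single l 1 : ι → ℕ) j) = poissonSeq (r j) (y j) :=
      fun j hj => by rw [Pi.add_apply, Pi.single_eq_of_ne (by simpa using hj), add_zero]
    rw [prod_congr rfl hcompl]
    simp only [Pi.add_apply, Pi.single_eq_same]
    push_cast
    rw [poissonSeq_succ_mul]

theorem tsum_prod_poissonSeq_mul_couponShare [DecidableEq ι]
    {r : ι → ℝ} (hr : ∀ j, 0 ≤ r j) (hΛ : ∑ j, r j ≠ 0) (c : ℕ) (l : ι) :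
    ∑' x : ι → ℕ, (∏ j, poissonSeq (r j) (x j)) * (x l * couponShare c (∑ j, x j)) =
      r l / (∑ j, r j) *
        (c - ∑ h ∈ range (c + 1), (c - h : ℝ) * poissonSeq (∑ j, r j) h) := by
  have hshare : ∀ s, |couponShare c (s + 1)| ≤ 1 := fun s =>
    abs_le.mpr ⟨by linarith [couponShare_nonneg c (s + 1)], couponShare_le_one c (s + 1)⟩
  calc ∑' x : ι → ℕ, (∏ j, poissonSeq (r j) (x j)) * (x l * couponShare c (∑ j, x j))
      = ∑' x : ι → ℕ, x l * (∏ j, poissonSeq (r j) (x j)) * couponShare c (∑ j, x j) :=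
        tsum_congr fun x => by ring
    _ = r l * ∑' s, poissonSeq (∑ j, r j) s * couponShare c (s + 1) := by
        rw [tsum_apply_mul_prod_poissonSeq_mul r l fun x => couponShare c (∑ j, x j),
          ← tsum_prod_poissonSeq_mul_comp_sum hr hshare]
        simp_rw [Pi.add_apply, sum_add_distrib, sum_pi_single', if_pos (mem_univ l)]
    _ = r l / (∑ j, r j) * ∑' s, s * poissonSeq (∑ j, r j) s * couponShare c s := by
        rw [tsum_natCast_mul_poissonSeq_mul]; field_simp
    _ = _ := by
        rw [tsum_congr fun s => by rw [mul_comm (s : ℝ), mul_assoc, natCast_mul_couponShare],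
          tsum_poissonSeq_mul_min]

end PoissonProduct

lemma integral_comp_eq_tsum_prod {Ω ι α : Type*} [MeasurableSpace Ω] [Fintype ι] [Countable α]
    [MeasurableSpace α] [MeasurableSingletonClass α] {μ : Measure Ω} [IsProbabilityMeasure μ]
    {Z : ι → Ω → α} (hZ : ∀ j, AEMeasurable (Z j) μ) (hindep : iIndepFun Z μ)
    {F : (ι → α) → ℝ} {C : ℝ} (hF : ∀ x, |F x| ≤ C) :
    ∫ ω, F (fun j => Z j ω) ∂μ = ∑' x, (∏ j, (μ.map (Z j)).real {x j}) * F x := by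
  have hW := aemeasurable_pi_lambda _ hZ
  have hFm : Measurable F := measurable_of_countable F
  have := Measure.isProbabilityMeasure_map hW
  have hFint : Integrable F (μ.map fun ω j => Z j ω) :=
    .of_bound hFm.aestronglyMeasurable C (ae_of_all _ fun x => (Real.norm_eq_abs _).trans_le (hF x))
  rw [← integral_map hW hFm.aestronglyMeasurable, integral_countable hFint,
    hindep.map_fun_eq_pi_map hZ]
  refine tsum_congr fun x => ?_
  rw [smul_eq_mul, measureReal_def, Measure.pi_singleton, ENNReal.toReal_prod]
  rfl

lemma map_binomial_real_singleton {p : NNReal} (hp : p ≤ 1) (M k : ℕ) :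
    (Measure.map Fin.val (PMF.binomial p hp M).toMeasure).real {k} = binomialSeq M p k := by
  rw [measureReal_def, Measure.map_apply (measurable_of_countable _) (measurableSet_singleton k)]
  rcases lt_or_ge M k with hk | hk
  · have hpre : (Fin.val ⁻¹' {k} : Set (Fin (M + 1))) = ∅ := by
      ext i; simp; omega
    rw [hpre, binomialSeq_eq_zero_of_lt hk, measure_empty, ENNReal.toReal_zero]
  · have hpre : (Fin.val ⁻¹' {k} : Set (Fin (M + 1))) = {⟨k, by omega⟩} := by
      ext i; simp [Fin.ext_iff]
    rw [hpre, PMF.toMeasure_apply_singleton _ _ (measurableSet_singleton _), PMF.binomial_apply]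
    simp only [Fin.val_last, ENNReal.toReal_mul, ENNReal.toReal_pow, ENNReal.coe_toReal,
      ENNReal.toReal_natCast, binomialSeq]
    rw [ENNReal.toReal_sub_of_le (by exact_mod_cast hp) ENNReal.one_ne_top]
    simp only [ENNReal.toReal_one, ENNReal.coe_toReal]
    ring

theorem coupon_expectation_poisson_approx_general {Ω : Type*} [MeasurableSpace Ω]
    (μ : Measure Ω) [IsProbabilityMeasure μ]
    (m c : ℕ)
    (M : Fin m → ℕ) (p : Fin m → NNReal) (hp : ∀ j, p j ≤ 1)
    (Z : Fin m → Ω → ℕ)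
    (hindep : iIndepFun Z μ)
    (hZ : ∀ j, Measure.map (Z j) μ =
      Measure.map (Fin.val)
        ((PMF.binomial (p j) (hp j) (M j)).toMeasure))
    (hΛ : 0 < ∑ j, (M j : ℝ) * (p j : ℝ))
    (l : Fin m) :
    |(∫ ω, ((Z l ω : ℝ) * (if (∑ j, Z j ω) ≤ c then (1 : ℝ) else 0)
          + (c : ℝ) * ((Z l ω : ℝ) / ((∑ j, Z j ω : ℕ) : ℝ)) *
              (if c < ∑ j, Z j ω then (1 : ℝ) else 0)) ∂μ)
      - ((M l : ℝ) * (p l : ℝ) / (∑ j, (M j : ℝ) * (p j : ℝ))) *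
          ((c : ℝ) - ∑ h ∈ Finset.range (c + 1),
            ((c : ℝ) - (h : ℝ)) * (∑ j, (M j : ℝ) * (p j : ℝ)) ^ h *
              Real.exp (-(∑ j, (M j : ℝ) * (p j : ℝ))) / (Nat.factorial h))| ≤
      2 * (c : ℝ) * ∑ j, (M j : ℝ) * (p j : ℝ) ^ 2 := by
  have hZmeas : ∀ j, AEMeasurable (Z j) μ := fun j => .of_map_ne_zero <| by
    rw [hZ j]
    exact (Measure.isProbabilityMeasure_map (measurable_of_countable _).aemeasurable).ne_zero
  have hp₀ : ∀ j, (0 : ℝ) ≤ p j := fun j => (p j).coe_nonneg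
  have hp₁ : ∀ j, (p j : ℝ) ≤ 1 := fun j => NNReal.coe_le_one.mpr (hp j)
  have hF : ∀ x : Fin m → ℕ, |(x l : ℝ) * couponShare c (∑ j, x j)| ≤ c := fun x =>
    abs_natCast_mul_couponShare_le c (single_le_sum (fun j _ => Nat.zero_le (x j)) (mem_univ l))
  have hpoisson : ∀ h : ℕ, ((c : ℝ) - h) * (∑ j, (M j : ℝ) * p j) ^ h *
      exp (-(∑ j, (M j : ℝ) * p j)) / h ! = (c - h) * poissonSeq (∑ j, (M j : ℝ) * p j) h :=
    fun h => by rw [poissonSeq]; ring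
  simp_rw [← natCast_mul_couponShare_eq, hpoisson]
  rw [integral_comp_eq_tsum_prod (F := fun x => (x l : ℝ) * couponShare c (∑ j, x j)) hZmeas
    hindep hF, ← tsum_prod_poissonSeq_mul_couponShare (fun j => by positivity) hΛ.ne' c l]
  simp_rw [hZ, map_binomial_real_singleton]
  calc _ ≤ c * ∑ j, ∑' k, |binomialSeq (M j) (p j) k - poissonSeq (M j * p j) k| :=
        abs_tsum_prod_apply_mul_sub_le (fun j => binomialSeq_nonneg (hp₀ j) (hp₁ j) (M j))
          (fun j => poissonSeq_nonneg (by positivity)) (fun j => hasSum_binomialSeq _ _)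
          (fun j => hasSum_poissonSeq _) hF
    _ ≤ c * ∑ j, 2 * (M j : ℝ) * p j ^ 2 := by
        gcongr with j
        exact tsum_abs_binomialSeq_sub_poissonSeq_le _ (hp₀ j) (hp₁ j)
    _ = 2 * c * ∑ j, (M j : ℝ) * p j ^ 2 := by
        rw [mul_sum, mul_sum]; exact sum_congr rfl fun j _ => by ring

/-- Poisson approximation of the expected number of coupons distributed at one step of the
chain-referral sampling. Let `Z_1, …, Z_m` be independent binomial random variables,
`Z_j ∼ Bin(M_j, p_j)`, let `λ_j = M_j p_j`, `Λ = Σ_j λ_j > 0` and `S = Z_1 + … + Z_m`.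
Then for every `l`,
`|E[Z_l · 1_{S ≤ c} + c (Z_l/S) 1_{S > c}] − (λ_l/Λ)(c − Σ_{h=0}^{c}(c−h)Λ^h e^{−Λ}/h!)|
  ≤ 2c · Σ_j M_j p_j²`. -/
theorem coupon_expectation_poisson_approx {Ω : Type*} [MeasurableSpace Ω]
    (μ : Measure Ω) [IsProbabilityMeasure μ]
    (m c : ℕ) (hm : 1 ≤ m) (hc : 1 ≤ c)
    (M : Fin m → ℕ) (p : Fin m → NNReal) (hp : ∀ j, p j ≤ 1)
    (Z : Fin m → Ω → ℕ)
    (hindep : iIndepFun Z μ)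
    (hZ : ∀ j, Measure.map (Z j) μ =
      Measure.map (Fin.val)
        ((PMF.binomial (p j) (hp j) (M j)).toMeasure))
    (hΛ : 0 < ∑ j, (M j : ℝ) * (p j : ℝ))
    (l : Fin m) :
    |(∫ ω, ((Z l ω : ℝ) * (if (∑ j, Z j ω) ≤ c then (1 : ℝ) else 0)
          + (c : ℝ) * ((Z l ω : ℝ) / ((∑ j, Z j ω : ℕ) : ℝ)) *
              (if c < ∑ j, Z j ω then (1 : ℝ) else 0)) ∂μ)
      - ((M l : ℝ) * (p l : ℝ) / (∑ j, (M j : ℝ) * (p j : ℝ))) *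
          ((c : ℝ) - ∑ h ∈ Finset.range (c + 1),
            ((c : ℝ) - (h : ℝ)) * (∑ j, (M j : ℝ) * (p j : ℝ)) ^ h *
              Real.exp (-(∑ j, (M j : ℝ) * (p j : ℝ))) / (Nat.factorial h))| ≤
      2 * (c : ℝ) * ∑ j, (M j : ℝ) * (p j : ℝ) ^ 2 :=
  coupon_expectation_poisson_approx_general μ m c M p hp Z hindep hZ hΛ l
end

section
/- Let T ∈ (0, 1] and δ > 0, and let x¹, x² : [0, T] → ℝ^{3m} be continuous functions, written x^i = (a^i, b^i, u^i) with a^i, b^i, u^i : [0, T] → ℝ^m, such that: (i) x¹_0 = x²_0; (ii) each x^i satisfies the integral equation x^i_t = x^i_0 + ∫_0^t f(x^i_s) ds for all t ∈ [0, T]; (iii) for i = 1, 2 and all t ∈ [0, T], all coordinates a^{i,(l)}_t are nonnegative, ‖a^i_t‖ := Σ_{l=1}^m a^{i,(l)}_t ≥ δ, and Λ^k(x^i_t) ≥ δ for all k ∈ {1, …, m}. Then x¹_t = x²_t for all t ∈ [0, T]. -/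
open MeasureTheory Finset

/-- `φ(c, Λ) = c − Σ_{h=0}^{c} (c−h) Λ^h e^{−Λ}/h!`, the expected number of coupons
distributed when the number of candidates is Poisson with parameter `Λ` and at most `c`
coupons are handed out. -/
noncomputable def crsPhi (c : ℕ) (L : ℝ) : ℝ :=
  (c : ℝ) - ∑ h ∈ Finset.range (c + 1),
    ((c : ℝ) - (h : ℝ)) * L ^ h * Real.exp (-L) / (Nat.factorial h)

/-- `λ^{k,l}(x) = λ_{kl} (π_l − a^{(l)} − u^{(l)})`. -/
def crsLam {m : ℕ} (lam : Fin m → Fin m → ℝ) (pi : Fin m → ℝ)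
    (a u : Fin m → ℝ) (k l : Fin m) : ℝ :=
  lam k l * (pi l - a l - u l)

/-- `Λ^k(x) = Σ_{l=1}^m λ^{k,l}(x)`. -/
def crsLamTot {m : ℕ} (lam : Fin m → Fin m → ℝ) (pi : Fin m → ℝ)
    (a u : Fin m → ℝ) (k : Fin m) : ℝ :=
  ∑ l, crsLam lam pi a u k l

/-- `μ^{k,l}(x) = λ_{kl} (π_l − a^{(l)} − b^{(l)} − u^{(l)})`. -/
def crsMu {m : ℕ} (lam : Fin m → Fin m → ℝ) (pi : Fin m → ℝ)
    (a b u : Fin m → ℝ) (k l : Fin m) : ℝ :=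
  lam k l * (pi l - a l - b l - u l)

/-- `‖a‖ = Σ_{l=1}^m a^{(l)}`. -/
def crsNorm {m : ℕ} (a : Fin m → ℝ) : ℝ := ∑ l, a l

/-- First component of the limiting vector field of the chain-referral sampling process. -/
noncomputable def crsF1 {m : ℕ} (c : ℕ) (lam : Fin m → Fin m → ℝ) (pi : Fin m → ℝ)
    (a u : Fin m → ℝ) (l : Fin m) : ℝ :=
  (∑ k, (a k / crsNorm a) * (crsLam lam pi a u k l / crsLamTot lam pi a u k) *
      crsPhi c (crsLamTot lam pi a u k)) - a l / crsNorm a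

/-- Second component of the limiting vector field of the chain-referral sampling process. -/
noncomputable def crsF2 {m : ℕ} (c : ℕ) (lam : Fin m → Fin m → ℝ) (pi : Fin m → ℝ)
    (a b u : Fin m → ℝ) (l : Fin m) : ℝ :=
  (∑ k, (a k / crsNorm a) * crsMu lam pi a b u k l) -
    ∑ k, (a k / crsNorm a) * (crsLam lam pi a u k l / crsLamTot lam pi a u k) *
      crsPhi c (crsLamTot lam pi a u k)

/-- Third component of the limiting vector field of the chain-referral sampling process. -/
noncomputable def crsF3 {m : ℕ} (a : Fin m → ℝ) (l : Fin m) : ℝ := a l / crsNorm a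

/-! The vector field `f` is `C¹` on the open set where `‖a‖ > 0` and every `Λ^k > 0`. By (iii)
both solutions stay in that set, so they sweep out a compact subset of it, on which `f` is
Lipschitz. After the fundamental theorem of calculus turns the integral equations into
one-sided derivatives, the Grönwall-type uniqueness theorem for Lipschitz vector fields
applies. -/

open Set Filter Topology

theorem ContDiffOn.exists_lipschitzOnWith_of_isOpen {E F : Type*} [NormedAddCommGroup E]
    [NormedSpace ℝ E] [NormedAddCommGroup F] [NormedSpace ℝ F] {f : E → F} {U s : Set E}
    (hf : ContDiffOn ℝ 1 f U) (hU : IsOpen U) (hs : IsCompact s) (hsU : s ⊆ U) :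
    ∃ K, LipschitzOnWith K f s :=
  LocallyLipschitzOn.exists_lipschitzOnWith_of_compact hs fun x hx => by
    obtain ⟨K, t, ht, hft⟩ := (hf.contDiffAt (hU.mem_nhds (hsU hx))).exists_lipschitzOnWith
    exact ⟨K, t, mem_nhdsWithin_of_mem_nhds ht, hft⟩

theorem hasDerivWithinAt_Ici_of_eq_add_integral {E : Type*} [NormedAddCommGroup E]
    [NormedSpace ℝ E] [CompleteSpace E] {g x : ℝ → E} {a b t : ℝ}
    (hg : ContinuousOn g (Icc a b)) (hx : ∀ u ∈ Icc a b, x u = x a + ∫ s in a..u, g s)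
    (ht : t ∈ Ico a b) : HasDerivWithinAt x (g t) (Ici t) t := by
  have hmem_Ici : Icc a b ∈ 𝓝[Ici t] t := Icc_mem_nhdsGE_of_mem ht
  have hmem_Ioi : Icc a b ∈ 𝓝[>] t := Icc_mem_nhdsGT_of_mem ht
  have hint : IntervalIntegrable g MeasureTheory.volume a t :=
    (hg.mono (Icc_subset_Icc_right ht.2.le)).intervalIntegrable_of_Icc ht.1
  have hFTC : HasDerivWithinAt (fun u => ∫ s in a..u, g s) (g t) (Ici t) t :=
    intervalIntegral.integral_hasDerivWithinAt_right hint
      ((hg.stronglyMeasurableAtFilter_nhdsWithin measurableSet_Icc t).filter_mono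
        (nhdsWithin_le_of_mem hmem_Ioi))
      ((hg t (Ico_subset_Icc_self ht)).mono_of_mem_nhdsWithin hmem_Ioi)
  exact (hFTC.const_add (x a)).congr_of_eventuallyEq (eventually_of_mem hmem_Ici hx)
    (hx t (Ico_subset_Icc_self ht))

abbrev CrsState (m : ℕ) := (Fin m → ℝ) × (Fin m → ℝ) × (Fin m → ℝ)

noncomputable def crsField {m : ℕ} (c : ℕ) (lam : Fin m → Fin m → ℝ) (pi : Fin m → ℝ)
    (x : CrsState m) : CrsState m :=
  (crsF1 c lam pi x.1 x.2.2, crsF2 c lam pi x.1 x.2.1 x.2.2, crsF3 x.1)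

def crsDomain {m : ℕ} (lam : Fin m → Fin m → ℝ) (pi : Fin m → ℝ) : Set (CrsState m) :=
  {x | 0 < crsNorm x.1 ∧ ∀ k, 0 < crsLamTot lam pi x.1 x.2.2 k}

theorem contDiff_crsPhi (c : ℕ) {n : WithTop ℕ∞} : ContDiff ℝ n (crsPhi c) := by
  unfold crsPhi; fun_prop

theorem contDiff_crsNorm {m : ℕ} {n : WithTop ℕ∞} : ContDiff ℝ n (crsNorm (m := m)) := by
  unfold crsNorm; fun_prop

theorem contDiff_crsLamTot {m : ℕ} (lam : Fin m → Fin m → ℝ) (pi : Fin m → ℝ) (k : Fin m)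
    {n : WithTop ℕ∞} : ContDiff ℝ n fun x : CrsState m => crsLamTot lam pi x.1 x.2.2 k := by
  unfold crsLamTot crsLam; fun_prop

theorem isOpen_crsDomain {m : ℕ} (lam : Fin m → Fin m → ℝ) (pi : Fin m → ℝ) :
    IsOpen (crsDomain (m := m) lam pi) := by
  simp only [crsDomain, ofPred_and, ofPred_forall]
  exact (isOpen_lt continuous_const ((contDiff_crsNorm (n := 0)).continuous.comp continuous_fst)).inter
    (isOpen_iInter_of_finite fun k =>
      isOpen_lt continuous_const (contDiff_crsLamTot lam pi k (n := 0)).continuous)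

theorem contDiffOn_crsField {m : ℕ} (c : ℕ) (lam : Fin m → Fin m → ℝ) (pi : Fin m → ℝ)
    {n : WithTop ℕ∞} : ContDiffOn ℝ n (crsField c lam pi) (crsDomain lam pi) := by
  have hN : ContDiff ℝ n fun x : CrsState m => crsNorm x.1 := contDiff_crsNorm.comp contDiff_fst
  have hL := contDiff_crsLamTot lam pi (n := n)
  have hLam : ∀ k l, ContDiff ℝ n fun x : CrsState m => crsLam lam pi x.1 x.2.2 k l := by
    unfold crsLam; fun_prop
  have hMu : ∀ k l, ContDiff ℝ n fun x : CrsState m => crsMu lam pi x.1 x.2.1 x.2.2 k l := by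
    unfold crsMu; fun_prop
  have hshare : ∀ k, ContDiffOn ℝ n (fun x : CrsState m => x.1 k / crsNorm x.1)
      (crsDomain lam pi) := fun k =>
    (by fun_prop : ContDiff ℝ n fun x : CrsState m => x.1 k).contDiffOn.div hN.contDiffOn
      fun x hx => hx.1.ne'
  have hsplit : ∀ k l, ContDiffOn ℝ n
      (fun x : CrsState m => crsLam lam pi x.1 x.2.2 k l / crsLamTot lam pi x.1 x.2.2 k)
      (crsDomain lam pi) := fun k l =>
    (hLam k l).contDiffOn.div (hL k).contDiffOn fun x hx => (hx.2 k).ne'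
  have hphi : ∀ k, ContDiff ℝ n fun x : CrsState m => crsPhi c (crsLamTot lam pi x.1 x.2.2 k) :=
    fun k => (contDiff_crsPhi c).comp (hL k)
  have hreferred : ∀ l, ContDiffOn ℝ n (fun x : CrsState m => ∑ k, x.1 k / crsNorm x.1 *
      (crsLam lam pi x.1 x.2.2 k l / crsLamTot lam pi x.1 x.2.2 k) *
        crsPhi c (crsLamTot lam pi x.1 x.2.2 k)) (crsDomain lam pi) := fun l =>
    ContDiffOn.sum fun k _ => ((hshare k).mul (hsplit k l)).mul (hphi k).contDiffOn
  refine ContDiffOn.prodMk (contDiffOn_pi.2 fun l => (hreferred l).sub (hshare l))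
    (ContDiffOn.prodMk (contDiffOn_pi.2 fun l => ?_) (contDiffOn_pi.2 hshare))
  exact (ContDiffOn.sum fun k _ => (hshare k).mul (hMu k l).contDiffOn).sub (hreferred l)

theorem hasDerivWithinAt_crsField {m c : ℕ} {lam : Fin m → Fin m → ℝ} {pi : Fin m → ℝ}
    {t₀ T : ℝ} {a b u : ℝ → Fin m → ℝ}
    (hcont : ContinuousOn (fun t => (a t, b t, u t)) (Icc t₀ T))
    (hdom : ∀ t ∈ Icc t₀ T, (a t, b t, u t) ∈ crsDomain lam pi)
    (heqa : ∀ t ∈ Icc t₀ T, ∀ l, a t l = a t₀ l + ∫ s in t₀..t, crsF1 c lam pi (a s) (u s) l)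
    (heqb : ∀ t ∈ Icc t₀ T, ∀ l,
      b t l = b t₀ l + ∫ s in t₀..t, crsF2 c lam pi (a s) (b s) (u s) l)
    (hequ : ∀ t ∈ Icc t₀ T, ∀ l, u t l = u t₀ l + ∫ s in t₀..t, crsF3 (a s) l)
    {t : ℝ} (ht : t ∈ Ico t₀ T) :
    HasDerivWithinAt (fun t => (a t, b t, u t)) (crsField c lam pi (a t, b t, u t)) (Ici t) t := by
  have hG : ContinuousOn (fun s => crsField c lam pi (a s, b s, u s)) (Icc t₀ T) :=
    (contDiffOn_crsField c lam pi (n := 0)).continuousOn.comp hcont hdom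
  have hG₁ := continuous_fst.comp_continuousOn hG
  have hG₂ := (continuous_fst.comp continuous_snd).comp_continuousOn hG
  have hG₃ := (continuous_snd.comp continuous_snd).comp_continuousOn hG
  refine .prodMk (hasDerivWithinAt_pi.2 fun l => ?_)
    (.prodMk (hasDerivWithinAt_pi.2 fun l => ?_) (hasDerivWithinAt_pi.2 fun l => ?_))
  · exact hasDerivWithinAt_Ici_of_eq_add_integral
      ((continuous_apply l).comp_continuousOn hG₁) (heqa · · l) ht
  · exact hasDerivWithinAt_Ici_of_eq_add_integral
      ((continuous_apply l).comp_continuousOn hG₂) (heqb · · l) ht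
  · exact hasDerivWithinAt_Ici_of_eq_add_integral
      ((continuous_apply l).comp_continuousOn hG₃) (hequ · · l) ht

theorem crs_ode_uniqueness_general (m c : ℕ)
    (pi : Fin m → ℝ)
    (lam : Fin m → Fin m → ℝ)
    (T δ : ℝ) (hδ : 0 < δ)
    (a₁ b₁ u₁ a₂ b₂ u₂ : ℝ → Fin m → ℝ)
    (hconta₁ : ContinuousOn a₁ (Set.Icc 0 T)) (hcontb₁ : ContinuousOn b₁ (Set.Icc 0 T))
    (hcontu₁ : ContinuousOn u₁ (Set.Icc 0 T))
    (hconta₂ : ContinuousOn a₂ (Set.Icc 0 T)) (hcontb₂ : ContinuousOn b₂ (Set.Icc 0 T))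
    (hcontu₂ : ContinuousOn u₂ (Set.Icc 0 T))
    (h0a : a₁ 0 = a₂ 0) (h0b : b₁ 0 = b₂ 0) (h0u : u₁ 0 = u₂ 0)
    (heqa₁ : ∀ t ∈ Set.Icc (0 : ℝ) T, ∀ l,
      a₁ t l = a₁ 0 l + ∫ s in (0 : ℝ)..t, crsF1 c lam pi (a₁ s) (u₁ s) l)
    (heqb₁ : ∀ t ∈ Set.Icc (0 : ℝ) T, ∀ l,
      b₁ t l = b₁ 0 l + ∫ s in (0 : ℝ)..t, crsF2 c lam pi (a₁ s) (b₁ s) (u₁ s) l)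
    (hequ₁ : ∀ t ∈ Set.Icc (0 : ℝ) T, ∀ l,
      u₁ t l = u₁ 0 l + ∫ s in (0 : ℝ)..t, crsF3 (a₁ s) l)
    (heqa₂ : ∀ t ∈ Set.Icc (0 : ℝ) T, ∀ l,
      a₂ t l = a₂ 0 l + ∫ s in (0 : ℝ)..t, crsF1 c lam pi (a₂ s) (u₂ s) l)
    (heqb₂ : ∀ t ∈ Set.Icc (0 : ℝ) T, ∀ l,
      b₂ t l = b₂ 0 l + ∫ s in (0 : ℝ)..t, crsF2 c lam pi (a₂ s) (b₂ s) (u₂ s) l)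
    (hequ₂ : ∀ t ∈ Set.Icc (0 : ℝ) T, ∀ l,
      u₂ t l = u₂ 0 l + ∫ s in (0 : ℝ)..t, crsF3 (a₂ s) l)
    (hpos₁ : ∀ t ∈ Set.Icc (0 : ℝ) T, (∀ l, 0 ≤ a₁ t l) ∧ δ ≤ crsNorm (a₁ t) ∧
      ∀ k, δ ≤ crsLamTot lam pi (a₁ t) (u₁ t) k)
    (hpos₂ : ∀ t ∈ Set.Icc (0 : ℝ) T, (∀ l, 0 ≤ a₂ t l) ∧ δ ≤ crsNorm (a₂ t) ∧
      ∀ k, δ ≤ crsLamTot lam pi (a₂ t) (u₂ t) k) :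
    ∀ t ∈ Set.Icc (0 : ℝ) T, a₁ t = a₂ t ∧ b₁ t = b₂ t ∧ u₁ t = u₂ t := by
  set x₁ : ℝ → CrsState m := fun t => (a₁ t, b₁ t, u₁ t)
  set x₂ : ℝ → CrsState m := fun t => (a₂ t, b₂ t, u₂ t)
  have hx₁ : ContinuousOn x₁ (Icc 0 T) := hconta₁.prodMk (hcontb₁.prodMk hcontu₁)
  have hx₂ : ContinuousOn x₂ (Icc 0 T) := hconta₂.prodMk (hcontb₂.prodMk hcontu₂)
  have hdom₁ : ∀ t ∈ Icc 0 T, x₁ t ∈ crsDomain lam pi := fun t ht =>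
    ⟨hδ.trans_le (hpos₁ t ht).2.1, fun k => hδ.trans_le ((hpos₁ t ht).2.2 k)⟩
  have hdom₂ : ∀ t ∈ Icc 0 T, x₂ t ∈ crsDomain lam pi := fun t ht =>
    ⟨hδ.trans_le (hpos₂ t ht).2.1, fun k => hδ.trans_le ((hpos₂ t ht).2.2 k)⟩
  obtain ⟨K, hK⟩ := (contDiffOn_crsField c lam pi).exists_lipschitzOnWith_of_isOpen
    (isOpen_crsDomain lam pi)
    ((isCompact_Icc.image_of_continuousOn hx₁).union (isCompact_Icc.image_of_continuousOn hx₂))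
    (union_subset (image_subset_iff.2 hdom₁) (image_subset_iff.2 hdom₂))
  have hx : EqOn x₁ x₂ (Icc 0 T) := ODE_solution_unique_of_mem_Icc_right (fun _ _ => hK)
    hx₁ (fun _ => hasDerivWithinAt_crsField hx₁ hdom₁ heqa₁ heqb₁ hequ₁)
    (fun t ht => .inl (mem_image_of_mem x₁ (Ico_subset_Icc_self ht)))
    hx₂ (fun _ => hasDerivWithinAt_crsField hx₂ hdom₂ heqa₂ heqb₂ hequ₂)
    (fun t ht => .inr (mem_image_of_mem x₂ (Ico_subset_Icc_self ht)))
    (by simp only [x₁, x₂, h0a, h0b, h0u])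
  intro t ht
  simpa only [x₁, x₂, Prod.mk.injEq] using hx ht

/-- Uniqueness of solutions of the limiting ODE system of the chain-referral sampling
process on a stochastic block model: two continuous solutions of the integral equation
`x_t = x_0 + ∫_0^t f(x_s) ds` on `[0, T]` with the same initial condition, whose `a`-parts
are nonnegative with `‖a_t‖ ≥ δ` and `Λ^k(x_t) ≥ δ`, coincide on `[0, T]`. -/
theorem crs_ode_uniqueness (m c : ℕ) (hm : 1 ≤ m) (hc : 1 ≤ c)
    (pi : Fin m → ℝ) (hpi0 : ∀ l, 0 ≤ pi l) (hpi : ∑ l, pi l = 1)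
    (lam : Fin m → Fin m → ℝ) (hlam0 : ∀ k l, 0 ≤ lam k l)
    (hlamsymm : ∀ k l, lam k l = lam l k)
    (T δ : ℝ) (hT0 : 0 < T) (hT1 : T ≤ 1) (hδ : 0 < δ)
    (a₁ b₁ u₁ a₂ b₂ u₂ : ℝ → Fin m → ℝ)
    (hconta₁ : ContinuousOn a₁ (Set.Icc 0 T)) (hcontb₁ : ContinuousOn b₁ (Set.Icc 0 T))
    (hcontu₁ : ContinuousOn u₁ (Set.Icc 0 T))
    (hconta₂ : ContinuousOn a₂ (Set.Icc 0 T)) (hcontb₂ : ContinuousOn b₂ (Set.Icc 0 T))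
    (hcontu₂ : ContinuousOn u₂ (Set.Icc 0 T))
    (h0a : a₁ 0 = a₂ 0) (h0b : b₁ 0 = b₂ 0) (h0u : u₁ 0 = u₂ 0)
    (heqa₁ : ∀ t ∈ Set.Icc (0 : ℝ) T, ∀ l,
      a₁ t l = a₁ 0 l + ∫ s in (0 : ℝ)..t, crsF1 c lam pi (a₁ s) (u₁ s) l)
    (heqb₁ : ∀ t ∈ Set.Icc (0 : ℝ) T, ∀ l,
      b₁ t l = b₁ 0 l + ∫ s in (0 : ℝ)..t, crsF2 c lam pi (a₁ s) (b₁ s) (u₁ s) l)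
    (hequ₁ : ∀ t ∈ Set.Icc (0 : ℝ) T, ∀ l,
      u₁ t l = u₁ 0 l + ∫ s in (0 : ℝ)..t, crsF3 (a₁ s) l)
    (heqa₂ : ∀ t ∈ Set.Icc (0 : ℝ) T, ∀ l,
      a₂ t l = a₂ 0 l + ∫ s in (0 : ℝ)..t, crsF1 c lam pi (a₂ s) (u₂ s) l)
    (heqb₂ : ∀ t ∈ Set.Icc (0 : ℝ) T, ∀ l,
      b₂ t l = b₂ 0 l + ∫ s in (0 : ℝ)..t, crsF2 c lam pi (a₂ s) (b₂ s) (u₂ s) l)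
    (hequ₂ : ∀ t ∈ Set.Icc (0 : ℝ) T, ∀ l,
      u₂ t l = u₂ 0 l + ∫ s in (0 : ℝ)..t, crsF3 (a₂ s) l)
    (hpos₁ : ∀ t ∈ Set.Icc (0 : ℝ) T, (∀ l, 0 ≤ a₁ t l) ∧ δ ≤ crsNorm (a₁ t) ∧
      ∀ k, δ ≤ crsLamTot lam pi (a₁ t) (u₁ t) k)
    (hpos₂ : ∀ t ∈ Set.Icc (0 : ℝ) T, (∀ l, 0 ≤ a₂ t l) ∧ δ ≤ crsNorm (a₂ t) ∧
      ∀ k, δ ≤ crsLamTot lam pi (a₂ t) (u₂ t) k) :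
    ∀ t ∈ Set.Icc (0 : ℝ) T, a₁ t = a₂ t ∧ b₁ t = b₂ t ∧ u₁ t = u₂ t :=
  crs_ode_uniqueness_general m c pi lam T δ hδ a₁ b₁ u₁ a₂ b₂ u₂ hconta₁ hcontb₁ hcontu₁ hconta₂
    hcontb₂ hcontu₂ h0a h0b h0u heqa₁ heqb₁ hequ₁ heqa₂ heqb₂ hequ₂ hpos₁ hpos₂
end
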